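/- arXiv:2004.13957 — 2 statements merged into one kernel-verified Lean document; each statement's English description precedes it below -/
import Mathlib

section
/- For every t ≥ 0, almost surely the set {v : Y_v ≤ t} of nodes of the infinite binary tree is finite. -/
open MeasureTheory ProbabilityTheory Real Filter
open scoped ENNReal NNReal

noncomputable section

instance : MeasurableSpace (Finset (List Bool)) := ⊤

/-- `v` is an external node of the (extended) binary tree whose set of internal nodes is `T`:
`v` is not internal, but every strict prefix (strict ancestor) of `v` is internal. -/
def ExtNode (T : Finset (List Bool)) (v : List Bool) : Prop :=
  v ∉ T ∧ ∀ w, w <+: v → w ≠ v → w ∈ T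

/-- The external height of the binary tree with internal node set `T`:
one plus the maximal depth of an internal node (`0` for the empty tree). -/
def heExt (T : Finset (List Bool)) : ℕ := T.sup fun v => v.length + 1

/-- The random digital search tree process `(D n)`, identified with the process of its
sets of internal nodes: `D 0` is the empty tree; given the whole past with current value `t`,
the next tree is obtained by turning an external node `v` of `t` into an internal one,
chosen according to the harmonic measure `2 ^ (-depth v)`. -/
structure IsDST {Ω : Type*} [MeasurableSpace Ω] (P : Measure Ω)
    (D : ℕ → Ω → Finset (List Bool)) : Prop where
  meas : ∀ n, Measurable (D n)
  init : ∀ᵐ ω ∂P, D 0 ω = ∅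
  growth : ∀ n : ℕ, ∀ᵐ ω ∂P, ∃ v, ExtNode (D n ω) v ∧ D (n + 1) ω = insert v (D n ω)
  step : ∀ (n : ℕ) (ts : Fin (n + 1) → Finset (List Bool)) (v : List Bool),
    ExtNode (ts (Fin.last n)) v →
    P {ω | ∀ i : Fin (n + 1), D i ω = ts i} ≠ 0 →
    ProbabilityTheory.cond P {ω | ∀ i : Fin (n + 1), D i ω = ts i}
        {ω | D (n + 1) ω = insert v (ts (Fin.last n))}
      = ((2 : ℝ≥0∞) ^ v.length)⁻¹

/-- A family `(X v)` of independent exponential random variables indexed by the nodes of the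
infinite binary tree, `X v` having rate `2 ^ (-depth v)`. -/
def IsExpFamily {Ω : Type*} [MeasurableSpace Ω] (P : Measure Ω)
    (X : List Bool → Ω → ℝ) : Prop :=
  iIndepFun X P ∧
    ∀ v : List Bool, Measure.map (X v) P = ProbabilityTheory.expMeasure (((2 : ℝ) ^ v.length)⁻¹)

/-- `Y v = ∑_{w ⪯ v} X w`, the sum over the path from the root to `v` inclusive. -/
def pathSum {Ω : Type*} (X : List Bool → Ω → ℝ) (v : List Bool) (ω : Ω) : ℝ :=
  ∑ i ∈ Finset.range (v.length + 1), X (v.take i) ω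

/-- `Ỹ k = min { Y v : depth v = k }`. -/
def minDepthSum {Ω : Type*} (X : List Bool → Ω → ℝ) (k : ℕ) (ω : Ω) : ℝ :=
  ⨅ f : Fin k → Bool, pathSum X (List.ofFn f) ω

/-- An i.i.d. sequence of rate-one exponential random variables. -/
def IsExpSeq {Ω : Type*} [MeasurableSpace Ω] (P : Measure Ω) (η : ℕ → Ω → ℝ) : Prop :=
  iIndepFun η P ∧
    ∀ i : ℕ, Measure.map (η i) P = ProbabilityTheory.expMeasure 1

/-- A rate-one Poisson process on `[0, ∞)`. -/
structure IsPoissonProc {Ω : Type*} [MeasurableSpace Ω] (P : Measure Ω)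
    (N : ℝ → Ω → ℕ) : Prop where
  meas : ∀ t, Measurable (N t)
  init : ∀ᵐ ω ∂P, N 0 ω = 0
  mono : ∀ᵐ ω ∂P, ∀ s t : ℝ, s ≤ t → N s ω ≤ N t ω
  indepIncr : ∀ (n : ℕ) (t : Fin (n + 1) → ℝ), Monotone t →
    iIndepFun
      (fun i : Fin n => fun ω => N (t i.succ) ω - N (t i.castSucc) ω) P
  incrDist : ∀ s t : ℝ, 0 ≤ s → s ≤ t →
    Measure.map (fun ω => N t ω - N s ω) P
      = ProbabilityTheory.poissonMeasure (Real.toNNReal (t - s))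

/-- `v` is a neighbour of the sticky set `S` (in the complete binary tree):
its parent or one of its children is sticky. -/
def AdjSticky (S : Finset (List Bool)) (v : List Bool) : Prop :=
  (v ≠ [] ∧ v.dropLast ∈ S) ∨ ∃ b : Bool, v ++ [b] ∈ S

/-- `v` can be the next sticky node: `v` neighbours `S` and no strict ancestor of `v` does
(so the directed random walk from the root stops at `v` with probability `2 ^ (-depth v)`). -/
def AggEligible (S : Finset (List Bool)) (v : List Bool) : Prop :=
  AdjSticky S v ∧ ∀ w, w <+: v → w ≠ v → ¬ AdjSticky S w

/-- The `2 ^ K` nodes at depth `K`. -/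
def bottomRow (K : ℕ) : Finset (List Bool) :=
  (Finset.univ : Finset (Fin K → Bool)).image List.ofFn

/-- The border aggregation model on the complete binary tree `T_K` of height `K`,
described by the process `(S n)` of sticky sets: `S 0` is the set of nodes at depth `K`;
given the whole past with current sticky set `t` not containing the root, the next node to
become sticky is `v` with probability `2 ^ (-depth v)` for each eligible `v` (the stopping
point of the directed random walk from the root); the process freezes once the root is sticky. -/
structure IsBAM {Ω : Type*} [MeasurableSpace Ω] (K : ℕ) (P : Measure Ω)
    (S : ℕ → Ω → Finset (List Bool)) : Prop where
  meas : ∀ n, Measurable (S n)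
  init : ∀ᵐ ω ∂P, S 0 ω = bottomRow K
  frozen : ∀ n : ℕ, ∀ᵐ ω ∂P, [] ∈ S n ω → S (n + 1) ω = S n ω
  growth : ∀ n : ℕ, ∀ᵐ ω ∂P, [] ∉ S n ω →
    ∃ v, AggEligible (S n ω) v ∧ S (n + 1) ω = insert v (S n ω)
  step : ∀ (n : ℕ) (ts : Fin (n + 1) → Finset (List Bool)) (v : List Bool),
    [] ∉ ts (Fin.last n) → AggEligible (ts (Fin.last n)) v →
    P {ω | ∀ i : Fin (n + 1), S i ω = ts i} ≠ 0 →
    ProbabilityTheory.cond P {ω | ∀ i : Fin (n + 1), S i ω = ts i}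
        {ω | S (n + 1) ω = insert v (ts (Fin.last n))}
      = ((2 : ℝ≥0∞) ^ v.length)⁻¹

/-- `ξ_K`: the number of particles released until the root becomes sticky. -/
def hitRoot {Ω : Type*} (S : ℕ → Ω → Finset (List Bool)) (ω : Ω) : ℕ :=
  sInf {n : ℕ | [] ∈ S n ω}

/-- `Ξ_K = ∑_{i=1}^{ξ_K} η_i`: the time the root becomes sticky in the continuous-time model. -/
def aggTime {Ω : Type*} (S : ℕ → Ω → Finset (List Bool)) (η : ℕ → Ω → ℝ) (ω : Ω) : ℝ :=
  ∑ i ∈ Finset.range (hitRoot S ω), η i ω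

/-- `Ỹ*_k = min { n : heExt (D n) > k }`. -/
def hitHeight {Ω : Type*} (D : ℕ → Ω → Finset (List Bool)) (k : ℕ) (ω : Ω) : ℕ :=
  sInf {n : ℕ | k < heExt (D n ω)}

/-- `m_K = 2 ^ (K - √(2K) + (1/2)·log₂ K - 1/ln 2 + log₂ K/(4√(2K)))`. -/
def mPaper (K : ℕ) : ℝ :=
  (2 : ℝ) ^ ((K : ℝ) - Real.sqrt (2 * K) + (1 / 2) * Real.logb 2 K - 1 / Real.log 2
    + Real.logb 2 K / (4 * Real.sqrt (2 * K)))

/-!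
Since the `X v` are almost surely nonnegative, a node `v = w ++ [b]` with `Y v ≤ t` has
`X w ≤ t` and `X v ≤ t`. For each of the `2 ^ (n + 1)` edges from depth `n` to depth `n + 1`
these two independent events have probability at most `t 2⁻ⁿ · t 2⁻⁽ⁿ⁺¹⁾`, so the expected
number of edges with both endpoints below `t` is at most `∑ₙ t² 2⁻ⁿ < ∞`. By Borel–Cantelli
almost surely only finitely many edges are such, hence only finitely many nodes have `Y v ≤ t`.
-/

lemma expMeasure_Iic_le {r : ℝ} (hr : 0 < r) (s : ℝ) :
    expMeasure r (Set.Iic s) ≤ ENNReal.ofReal (r * s) := by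
  rw [expMeasure, gammaMeasure, withDensity_apply _ measurableSet_Iic]
  refine (lintegral_exponentialPDF_eq_antiDeriv hr s).trans_le ?_
  split_ifs
  · exact ENNReal.ofReal_le_ofReal (by linarith [Real.add_one_le_exp (-(r * s))])
  · simp

lemma expMeasure_Iio_zero (r : ℝ) : expMeasure r (Set.Iio 0) = 0 := by
  rw [expMeasure, gammaMeasure, withDensity_apply _ measurableSet_Iio]
  exact lintegral_exponentialPDF_of_nonpos le_rfl

section ExponentialLaw

variable {Ω : Type*} [MeasurableSpace Ω] {P : Measure Ω} {Y : Ω → ℝ} {r : ℝ}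

lemma aemeasurable_of_map_eq_expMeasure (hr : 0 < r) (hY : P.map Y = expMeasure r) :
    AEMeasurable Y P :=
  .of_map_ne_zero <| hY ▸ (isProbabilityMeasure_expMeasure hr).ne_zero

lemma ae_nonneg_of_map_eq_expMeasure (hr : 0 < r) (hY : P.map Y = expMeasure r) :
    ∀ᵐ ω ∂P, 0 ≤ Y ω := by
  have hnull : P (Y ⁻¹' Set.Iio 0) = 0 := by
    rw [← Measure.map_apply_of_aemeasurable (aemeasurable_of_map_eq_expMeasure hr hY)
      measurableSet_Iio, hY, expMeasure_Iio_zero]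
  filter_upwards [measure_eq_zero_iff_ae_notMem.1 hnull] with ω hω
  simpa using hω

lemma measure_setOf_le_le_of_map_eq_expMeasure (hr : 0 < r) (hY : P.map Y = expMeasure r)
    (s : ℝ) :
    P {ω | Y ω ≤ s} ≤ ENNReal.ofReal (r * s) := by
  change P (Y ⁻¹' Set.Iic s) ≤ _
  rw [← Measure.map_apply_of_aemeasurable (aemeasurable_of_map_eq_expMeasure hr hY)
    measurableSet_Iic, hY]
  exact expMeasure_Iic_le hr s

end ExponentialLaw

theorem ENNReal.tsum_list_length {α : Type*} [Fintype α] (f : ℕ → ℝ≥0∞) :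
    ∑' l : List α, f l.length = ∑' n, (Fintype.card α : ℝ≥0∞) ^ n * f n := by
  rw [← ENNReal.tsum_fiberwise _ List.length]
  refine tsum_congr fun n => ?_
  have hcard : ENat.card (List.length ⁻¹' {n} : Set (List α)) = Fintype.card α ^ n := by
    rw [← Nat.cast_pow, ← card_vector n, ← ENat.card_eq_coe_fintype_card]
    exact ENat.card_congr (Equiv.refl _)
  rw [tsum_congr fun l : (List.length ⁻¹' {n} : Set (List α)) => congrArg f l.2,
    ENNReal.tsum_const, hcard]
  norm_cast

lemma pathSum_append_singleton (X : List Bool → Ω → ℝ) (w : List Bool) (b : Bool) (ω : Ω) :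
    pathSum X (w ++ [b]) ω = pathSum X w ω + X (w ++ [b]) ω := by
  rw [pathSum, pathSum, List.length_append, List.length_singleton, Finset.sum_range_succ]
  congr 1
  · refine Finset.sum_congr rfl fun i hi => ?_
    rw [List.take_append_of_le_length (Nat.lt_succ_iff.1 (Finset.mem_range.1 hi))]
  · rw [List.take_of_length_le (by simp)]

section PathSum

variable {Ω : Type*} {X : List Bool → Ω → ℝ} {ω : Ω}

lemma self_le_pathSum (hX : ∀ v, 0 ≤ X v ω) (v : List Bool) : X v ω ≤ pathSum X v ω := by
  simpa [pathSum] using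
    Finset.single_le_sum (fun i _ => hX (v.take i)) (Finset.self_mem_range_succ v.length)

lemma pathSum_nonneg (hX : ∀ v, 0 ≤ X v ω) (v : List Bool) : 0 ≤ pathSum X v ω :=
  Finset.sum_nonneg fun i _ => hX (v.take i)

lemma setOf_pathSum_le_subset (hX : ∀ v, 0 ≤ X v ω) (t : ℝ) :
    {v | pathSum X v ω ≤ t} ⊆ insert [] ((fun e : List Bool × Bool => e.1 ++ [e.2]) ''
      {e | X e.1 ω ≤ t ∧ X (e.1 ++ [e.2]) ω ≤ t}) := by
  intro v hv
  rcases v.eq_nil_or_concat' with rfl | ⟨w, b, rfl⟩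
  · exact Set.mem_insert _ _
  rw [Set.mem_ofPred_eq, pathSum_append_singleton] at hv
  refine Or.inr ⟨(w, b), ⟨?_, ?_⟩, rfl⟩
  · linarith [self_le_pathSum hX w, hX (w ++ [b])]
  · linarith [pathSum_nonneg hX w]

end PathSum

namespace IsExpFamily

variable {Ω : Type*} [MeasurableSpace Ω] {P : Measure Ω} {X : List Bool → Ω → ℝ}

lemma ae_nonneg (hX : IsExpFamily P X) : ∀ᵐ ω ∂P, ∀ v, 0 ≤ X v ω :=
  ae_all_iff.2 fun v => ae_nonneg_of_map_eq_expMeasure (by positivity) (hX.2 v)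

lemma measure_setOf_le_le (hX : IsExpFamily P X) (v : List Bool) (t : ℝ) :
    P {ω | X v ω ≤ t} ≤ ENNReal.ofReal t * 2⁻¹ ^ v.length := by
  refine (measure_setOf_le_le_of_map_eq_expMeasure (by positivity) (hX.2 v) t).trans_eq ?_
  rw [mul_comm, ENNReal.ofReal_mul' (by positivity), ← inv_pow, ENNReal.ofReal_pow (by norm_num),
    ENNReal.ofReal_inv_of_pos two_pos, ENNReal.ofReal_ofNat]

lemma measure_edge_eq_mul (hX : IsExpFamily P X) (w : List Bool) (b : Bool) (t : ℝ) :
    P {ω | X w ω ≤ t ∧ X (w ++ [b]) ω ≤ t} = P {ω | X w ω ≤ t} * P {ω | X (w ++ [b]) ω ≤ t} :=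
  (hX.1.indepFun (by simp)).measure_inter_preimage_eq_mul _ _ measurableSet_Iic measurableSet_Iic

lemma tsum_measure_edge_ne_top (hX : IsExpFamily P X) (t : ℝ) :
    ∑' e : List Bool × Bool, P {ω | X e.1 ω ≤ t ∧ X (e.1 ++ [e.2]) ω ≤ t} ≠ ∞ := by
  have hcancel (n : ℕ) : (2 : ℝ≥0∞) ^ n * 2⁻¹ ^ n = 1 := by
    rw [← mul_pow, ENNReal.mul_inv_cancel two_ne_zero ENNReal.ofNat_ne_top, one_pow]
  refine LT.lt.ne ?_
  calc ∑' e : List Bool × Bool, P {ω | X e.1 ω ≤ t ∧ X (e.1 ++ [e.2]) ω ≤ t}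
      = ∑' w : List Bool, ∑ b : Bool, P {ω | X w ω ≤ t} * P {ω | X (w ++ [b]) ω ≤ t} := by
        rw [ENNReal.tsum_prod (f := fun w b => P {ω | X w ω ≤ t ∧ X (w ++ [b]) ω ≤ t})]
        simp only [tsum_fintype, hX.measure_edge_eq_mul]
    _ ≤ ∑' w : List Bool, ∑ _b : Bool,
          ENNReal.ofReal t * 2⁻¹ ^ w.length * (ENNReal.ofReal t * 2⁻¹ ^ (w.length + 1)) := by
        gcongr with w b
        · exact hX.measure_setOf_le_le w t
        · simpa using hX.measure_setOf_le_le (w ++ [b]) t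
    _ = ∑' n : ℕ, ENNReal.ofReal t ^ 2 * 2⁻¹ ^ n := by
        rw [ENNReal.tsum_list_length fun n =>
          ∑ _b : Bool, ENNReal.ofReal t * 2⁻¹ ^ n * (ENNReal.ofReal t * 2⁻¹ ^ (n + 1))]
        refine tsum_congr fun n => ?_
        rw [Finset.sum_const, Finset.card_univ, Fintype.card_bool, nsmul_eq_mul, Nat.cast_ofNat]
        calc (2 : ℝ≥0∞) ^ n *
              (2 * (ENNReal.ofReal t * 2⁻¹ ^ n * (ENNReal.ofReal t * 2⁻¹ ^ (n + 1))))
            = ENNReal.ofReal t ^ 2 * 2⁻¹ ^ n * (2 ^ (n + 1) * 2⁻¹ ^ (n + 1)) := by ring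
          _ = ENNReal.ofReal t ^ 2 * 2⁻¹ ^ n := by rw [hcancel, mul_one]
    _ = ENNReal.ofReal t ^ 2 * 2 := by
        rw [ENNReal.tsum_mul_left, ENNReal.tsum_geometric, ENNReal.one_sub_inv_two, inv_inv]
    _ < ∞ := by finiteness

end IsExpFamily

theorem internalSet_ae_finite_general {Ω : Type} [MeasurableSpace Ω]
    (P : Measure Ω)
    (X : List Bool → Ω → ℝ) (hX : IsExpFamily P X) (t : ℝ) :
    ∀ᵐ ω ∂P, {v : List Bool | pathSum X v ω ≤ t}.Finite := by
  filter_upwards [ae_finite_setOfPred_mem (hX.tsum_measure_edge_ne_top t), hX.ae_nonneg]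
    with ω hfin hnonneg
  exact ((hfin.image _).insert []).subset (setOf_pathSum_le_subset hnonneg t)

/-- for every `t ≥ 0`, almost surely the set `{v | Y v ≤ t}` of nodes of the
infinite binary tree is finite. -/
theorem internalSet_ae_finite {Ω : Type} [MeasurableSpace Ω]
    (P : Measure Ω) [IsProbabilityMeasure P]
    (X : List Bool → Ω → ℝ) (hX : IsExpFamily P X) (t : ℝ) (ht : 0 ≤ t) :
    ∀ᵐ ω ∂P, {v : List Bool | pathSum X v ω ≤ t}.Finite :=
  internalSet_ae_finite_general P X hX t

end
end

section
/- Let X and Y be random variables taking values in the nonnegative integers, and let (η_i)_{i≥1} be i.i.d. exponential random variables of rate 1, independent of X and independent of Y. If Σ_{i=1}^{X} η_i and Σ_{i=1}^{Y} η_i have the same distribution, then X and Y have the same distribution. -/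
open MeasureTheory ProbabilityTheory Real Filter
open scoped ENNReal NNReal

noncomputable section

/-!
Given `X = n`, the sum `∑_{i<n} η_i` is a sum of `n` independent rate-one exponentials, so for
`t ≤ 0` its Laplace transform is `(1 - t)⁻¹ ^ n`. Averaging over the independent `X`, the Laplace
transform of `∑_{i<X} η_i` at `t` is the generating function `E[z ^ X]` of `X` at `z = (1 - t)⁻¹`,
which sweeps out `(0, 1]`. A power series with bounded coefficients that vanishes on `(0, 1)` is
identically zero, so the generating function, hence the law of `X`, is determined by the law of
the random sum.
-/

open Set Topology

lemma integral_exp_mul_gammaMeasure {a r t : ℝ} (ha : 0 < a) (hr : 0 < r) (ht : t < r) :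
    ∫ x, exp (t * x) ∂gammaMeasure a r = (r / (r - t)) ^ a := by
  have hpdf : ∀ x, (gammaPDF a r x).toReal * exp (t * x) = (Ici (0 : ℝ)).indicator
      (fun x ↦ r ^ a / Gamma a * (x ^ (a - 1) * exp (-((r - t) * x)))) x := by
    intro x
    rcases lt_or_ge x 0 with hx | hx
    · simp [gammaPDF_of_neg hx, hx]
    · rw [gammaPDF_of_nonneg hx, ENNReal.toReal_ofReal (by positivity),
        indicator_of_mem (mem_Ici.2 hx), mul_assoc, mul_assoc, ← exp_add]
      ring_nf
  have hr' : 0 < r - t := sub_pos.2 ht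
  rw [gammaMeasure, integral_withDensity_eq_integral_toReal_smul (f := gammaPDF a r)
    (measurable_gammaPDFReal a r).ennreal_ofReal (.of_forall fun _ ↦ ENNReal.ofReal_lt_top)]
  simp only [smul_eq_mul, hpdf]
  rw [integral_indicator measurableSet_Ici, integral_Ici_eq_integral_Ioi, integral_const_mul,
    integral_rpow_mul_exp_neg_mul_Ioi ha hr', div_rpow hr.le hr'.le, one_div, inv_rpow hr'.le]
  field_simp [(Gamma_pos_of_pos ha).ne']

lemma hasFPowerSeriesAt_tsum_mul_pow {c : ℕ → ℝ} {C : ℝ} (hc : ∀ n, |c n| ≤ C) :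
    HasFPowerSeriesAt (fun z ↦ ∑' n, c n * z ^ n) (FormalMultilinearSeries.ofScalars ℝ c) 0 := by
  set p := FormalMultilinearSeries.ofScalars ℝ c
  have hradius : 0 < p.radius :=
    lt_of_lt_of_le (by simp) <| p.le_radius_of_bound C (r := 1) fun n ↦ by
      simpa [p, FormalMultilinearSeries.ofScalars_norm] using hc n
  convert (p.hasFPowerSeriesOnBall hradius).hasFPowerSeriesAt using 1
  exact funext fun z ↦ (FormalMultilinearSeries.ofScalars_sum_eq c z).symm

lemma eq_of_tsum_mul_pow_eq {c d : ℕ → ℝ} {C D ε : ℝ} (hc : ∀ n, |c n| ≤ C) (hd : ∀ n, |d n| ≤ D)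
    (hε : 0 < ε) (h : ∀ z ∈ Ioo 0 ε, ∑' n, c n * z ^ n = ∑' n, d n * z ^ n) : c = d := by
  have hc' := hasFPowerSeriesAt_tsum_mul_pow hc
  have hd' := hasFPowerSeriesAt_tsum_mul_pow hd
  have hfreq : ∃ᶠ z in 𝓝[≠] (0 : ℝ), ∑' n, c n * z ^ n = ∑' n, d n * z ^ n := by
    refine Frequently.filter_mono (Eventually.frequently ?_) (nhdsGT_le_nhdsNE 0)
    filter_upwards [Ioo_mem_nhdsGT hε] using h
  have heq := (hc'.analyticAt.frequently_eq_iff_eventually_eq hd'.analyticAt).1 hfreq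
  exact FormalMultilinearSeries.ofScalars_series_injective ℝ ℝ
    (hc'.eq_formalMultilinearSeries_of_eventually hd' heq)

lemma MeasureTheory.Measure.ext_of_integral_pow_eq {μ ν : Measure ℕ} [IsFiniteMeasure μ]
    [IsFiniteMeasure ν] (h : ∀ z ∈ Ioo (0 : ℝ) 1, ∫ n, z ^ n ∂μ = ∫ n, z ^ n ∂ν) : μ = ν := by
  have hpgf (ρ : Measure ℕ) [IsFiniteMeasure ρ] (z : ℝ) (hz : z ∈ Ioo 0 1) :
      ∫ n, z ^ n ∂ρ = ∑' n, ρ.real {n} * z ^ n :=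
    integral_countable (.of_bound (by fun_prop) 1 (.of_forall fun n ↦ by
      simpa [abs_of_pos hz.1] using pow_le_one₀ hz.1.le hz.2.le))
  have hbound (ρ : Measure ℕ) [IsFiniteMeasure ρ] (n : ℕ) : |ρ.real {n}| ≤ ρ.real univ := by
    rw [abs_of_nonneg measureReal_nonneg]
    exact measureReal_mono (subset_univ _)
  have hcoeff : (fun n ↦ μ.real {n}) = fun n ↦ ν.real {n} :=
    eq_of_tsum_mul_pow_eq (hbound μ) (hbound ν) one_pos fun z hz ↦ by
      rw [← hpgf μ z hz, ← hpgf ν z hz, h z hz]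
  exact Measure.ext_of_singleton fun n ↦ (measureReal_eq_measureReal_iff).1 (congrFun hcoeff n)

lemma ProbabilityTheory.IndepFun.integral_comp_eq_integral_integral {Ω α β E : Type*}
    [MeasurableSpace Ω] [MeasurableSpace α] [MeasurableSpace β] [NormedAddCommGroup E]
    [NormedSpace ℝ E]
    {P : Measure Ω} [IsFiniteMeasure P] {X : Ω → α} {V : Ω → β} (hXV : IndepFun X V P)
    (hX : AEMeasurable X P) (hV : AEMeasurable V P) {F : α × β → E}
    (hF : Integrable F (P.map fun ω ↦ (X ω, V ω))) :
    ∫ ω, F (X ω, V ω) ∂P = ∫ a, ∫ b, F (a, b) ∂(P.map V) ∂(P.map X) := by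
  have hlaw := (indepFun_iff_map_prod_eq_prod_map_map hX hV).1 hXV
  rw [← integral_map (hX.prodMk hV) hF.aestronglyMeasurable, hlaw]
  exact integral_prod F (hlaw ▸ hF)

lemma measurable_sum_range_apply :
    Measurable fun p : ℕ × (ℕ → ℝ) ↦ ∑ i ∈ Finset.range p.1, p.2 i :=
  measurable_from_prod_countable_right fun n ↦
    Finset.measurable_sum (Finset.range n) fun i _ ↦ measurable_pi_apply i

namespace IsExpSeq

variable {Ω : Type*} [MeasurableSpace Ω] {P : Measure Ω} {η : ℕ → Ω → ℝ}

lemma aemeasurable (hη : IsExpSeq P η) (i : ℕ) : AEMeasurable (η i) P :=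
  .of_map_ne_zero <| by
    rw [hη.2 i]
    exact (isProbabilityMeasure_expMeasure one_pos).ne_zero

lemma ae_nonneg (hη : IsExpSeq P η) : ∀ᵐ ω ∂P, ∀ i, 0 ≤ η i ω := by
  refine ae_all_iff.2 fun i ↦ ae_of_ae_map (hη.aemeasurable i) ?_
  rw [hη.2 i, expMeasure, gammaMeasure,
    ae_withDensity_iff (f := gammaPDF 1 1) (measurable_gammaPDFReal 1 1).ennreal_ofReal]
  refine .of_forall fun x hx ↦ ?_
  contrapose! hx
  exact gammaPDF_of_neg hx

lemma mgf_sum_range (hη : IsExpSeq P η) (n : ℕ) {t : ℝ} (ht : t < 1) :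
    mgf (∑ i ∈ Finset.range n, η i) P t = (1 - t)⁻¹ ^ n := by
  rw [hη.1.mgf_sum₀ hη.aemeasurable, Finset.prod_eq_pow_card (b := (1 - t)⁻¹), Finset.card_range]
  intro i _
  rw [← mgf_id_map (hη.aemeasurable i), hη.2 i, mgf, expMeasure]
  simpa [one_div] using integral_exp_mul_gammaMeasure one_pos one_pos ht

lemma integral_exp_mul_map_sum_range (hη : IsExpSeq P η) {X : Ω → ℕ} (hX : AEMeasurable X P)
    (hXη : IndepFun X (fun ω i ↦ η i ω) P) {t : ℝ} (ht : t ≤ 0) :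
    ∫ x, exp (t * x) ∂(P.map fun ω ↦ ∑ i ∈ Finset.range (X ω), η i ω)
      = ∫ n, (1 - t)⁻¹ ^ n ∂(P.map X) := by
  have := hη.1.isProbabilityMeasure
  have hV : AEMeasurable (fun ω i ↦ η i ω) P := aemeasurable_pi_lambda _ hη.aemeasurable
  have hXV := hX.prodMk hV
  have hF : Measurable fun p : ℕ × (ℕ → ℝ) ↦ exp (t * ∑ i ∈ Finset.range p.1, p.2 i) :=
    (measurable_sum_range_apply.const_mul t).exp
  have hF_int : Integrable (fun p : ℕ × (ℕ → ℝ) ↦ exp (t * ∑ i ∈ Finset.range p.1, p.2 i))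
      (P.map fun ω ↦ (X ω, fun i ↦ η i ω)) := by
    refine (integrable_map_measure hF.aestronglyMeasurable hXV).2 (.of_bound
      (hF.comp_aemeasurable hXV).aestronglyMeasurable 1 ?_)
    filter_upwards [hη.ae_nonneg] with ω hω
    simpa [abs_of_pos (exp_pos _)] using
      mul_nonpos_of_nonpos_of_nonneg ht (Finset.sum_nonneg fun i _ ↦ hω i)
  have hS : AEMeasurable (fun ω ↦ ∑ i ∈ Finset.range (X ω), η i ω) P :=
    measurable_sum_range_apply.comp_aemeasurable hXV
  rw [integral_map hS (by fun_prop),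
    hXη.integral_comp_eq_integral_integral hX hV hF_int]
  refine integral_congr_ae (.of_forall fun n ↦ ?_)
  have hFn : Measurable fun g : ℕ → ℝ ↦ exp (t * ∑ i ∈ Finset.range n, g i) :=
    hF.comp measurable_prodMk_left
  dsimp only
  rw [integral_map hV hFn.aestronglyMeasurable, ← hη.mgf_sum_range n (by linarith), mgf]
  simp only [Finset.sum_apply]

end IsExpSeq

/-- if `X, Y` are `ℕ`-valued random variables and `(η_i)` is an i.i.d.
sequence of rate-one exponentials independent of `X` and independent of `Y`, and if
`∑_{i<X} η_i ≗ ∑_{i<Y} η_i`, then `X ≗ Y`. -/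
theorem exp_sum_dist_inj {Ω : Type} [MeasurableSpace Ω]
    (P : Measure Ω) [IsProbabilityMeasure P]
    (X Y : Ω → ℕ) (hXm : Measurable X) (hYm : Measurable Y)
    (η : ℕ → Ω → ℝ) (hη : IsExpSeq P η)
    (hXη : IndepFun X (fun ω (i : ℕ) => η i ω) P)
    (hYη : IndepFun Y (fun ω (i : ℕ) => η i ω) P)
    (h : Measure.map (fun ω => ∑ i ∈ Finset.range (X ω), η i ω) P
        = Measure.map (fun ω => ∑ i ∈ Finset.range (Y ω), η i ω) P) :
    Measure.map X P = Measure.map Y P := by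
  refine Measure.ext_of_integral_pow_eq fun z hz ↦ ?_
  have ht : 1 - z⁻¹ ≤ 0 := sub_nonpos.2 (one_le_inv₀ hz.1 |>.2 hz.2.le)
  have hz' : (1 - (1 - z⁻¹))⁻¹ = z := by simp
  rw [← hz', ← hη.integral_exp_mul_map_sum_range hXm.aemeasurable hXη ht, h,
    hη.integral_exp_mul_map_sum_range hYm.aemeasurable hYη ht]
end
end
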